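/- arXiv:2601.17758 — 2 statements merged into one kernel-verified Lean document; each statement's English description precedes it below -/
import Mathlib

section
/- Let G = {G_1, ..., G_{2n}} be a collection of 2n bipartite graphs on the same bipartition V = (X, Y) with |X| = |Y| = n. If δ(G_i) ≥ ⌈n/2⌉ for each i ∈ [2n], then either (i) G contains a partial transversal isomorphic to a Hamiltonian path (a path on all 2n vertices whose 2n-1 edges receive distinct indices in [2n]); or (ii) n is even and G_1 = ... = G_{2n} = K_{n/2,n/2} ∪ K_{n/2,n/2}. -/
open Finset

variable {V : Type*} [DecidableEq V]

/-- `v 0, …, v len` is a path whose `i`-th edge `v i – v (i+1)` lies in `G (φ i)`,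
with pairwise distinct labels `φ i ∈ {1, …, s}`. -/
def IsRainbowPath (G : ℕ → SimpleGraph V) (s len : ℕ) (v : ℕ → V) (φ : ℕ → ℕ) : Prop :=
  Set.InjOn v (Set.Iic len) ∧ Set.InjOn φ (Set.Iio len) ∧
  (∀ i < len, 1 ≤ φ i ∧ φ i ≤ s) ∧
  ∀ i < len, (G (φ i)).Adj (v i) (v (i + 1))

/-- a rainbow (partial transversal) cycle with `len` edges. -/
def IsRainbowCycle (G : ℕ → SimpleGraph V) (s len : ℕ) (v : ℕ → V) (φ : ℕ → ℕ) : Prop :=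
  Set.InjOn v (Set.Iio len) ∧ v len = v 0 ∧ Set.InjOn φ (Set.Iio len) ∧
  (∀ i < len, 1 ≤ φ i ∧ φ i ≤ s) ∧
  ∀ i < len, (G (φ i)).Adj (v i) (v (i + 1))

/-- the collection `G 1, …, G s` has a (partial) transversal Hamiltonian path
on the `2n` vertices. -/
def HasRainbowHamPath (G : ℕ → SimpleGraph V) (s n : ℕ) : Prop :=
  ∃ v : ℕ → V, ∃ φ : ℕ → ℕ,
    IsRainbowPath G s (2 * n - 1) v φ ∧ ∀ w : V, ∃ i ≤ 2 * n - 1, v i = w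

/-- a transversal Hamiltonian path with endpoints `x` and `y`. -/
def HasRainbowHamPathBetween (G : ℕ → SimpleGraph V) (s n : ℕ) (x y : V) : Prop :=
  ∃ v : ℕ → V, ∃ φ : ℕ → ℕ,
    IsRainbowPath G s (2 * n - 1) v φ ∧ v 0 = x ∧ v (2 * n - 1) = y ∧
    ∀ w : V, ∃ i ≤ 2 * n - 1, v i = w

/-- every `G i`, `1 ≤ i ≤ s`, equals `K_{n/2,n/2} ∪ K_{n/2,n/2}` with respect to a common
partition `X = X1 ∪ X2`, `Y = Y1 ∪ Y2`. -/
def AllTwoCompleteBip (G : ℕ → SimpleGraph V) (s n : ℕ) (X Y : Finset V) : Prop :=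
  ∃ X1 X2 Y1 Y2 : Finset V,
    Disjoint X1 X2 ∧ Disjoint Y1 Y2 ∧ X1 ∪ X2 = X ∧ Y1 ∪ Y2 = Y ∧
    X1.card = n / 2 ∧ X2.card = n / 2 ∧ Y1.card = n / 2 ∧ Y2.card = n / 2 ∧
    ∀ i, 1 ≤ i → i ≤ s → ∀ a b : V,
      (G i).Adj a b ↔ ((a ∈ X1 ∧ b ∈ Y1) ∨ (b ∈ X1 ∧ a ∈ Y1) ∨
                       (a ∈ X2 ∧ b ∈ Y2) ∨ (b ∈ X2 ∧ a ∈ Y2))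

/-- the adjacency relation of the graph `F`: all edges from `xs` to `Y1 ∪ Y2`,
all edges from `ys` to `X1 ∪ X2`, and all edges between `Xj` and `Yj`, `j = 1, 2`. -/
def FAdj (xs ys : V) (X1 X2 Y1 Y2 : Finset V) (a b : V) : Prop :=
  (a = xs ∧ b ∈ Y1 ∪ Y2) ∨ (b = xs ∧ a ∈ Y1 ∪ Y2) ∨
  (a = ys ∧ b ∈ X1 ∪ X2) ∨ (b = ys ∧ a ∈ X1 ∪ X2) ∨
  (a ∈ X1 ∧ b ∈ Y1) ∨ (b ∈ X1 ∧ a ∈ Y1) ∨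
  (a ∈ X2 ∧ b ∈ Y2) ∨ (b ∈ X2 ∧ a ∈ Y2)

/-- `G0` is one of the exceptional graphs `F`, `F'` on the bipartition `(X, Y)`. -/
def IsFOrF' (G0 : SimpleGraph V) (X Y : Finset V) (n : ℕ) : Prop :=
  ∃ xs ys : V, ∃ X1 X2 Y1 Y2 : Finset V,
    xs ∈ X ∧ ys ∈ Y ∧ Disjoint X1 X2 ∧ Disjoint Y1 Y2 ∧
    xs ∉ X1 ∪ X2 ∧ ys ∉ Y1 ∪ Y2 ∧
    insert xs (X1 ∪ X2) = X ∧ insert ys (Y1 ∪ Y2) = Y ∧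
    X1.card = (n - 1) / 2 ∧ X2.card = (n - 1) / 2 ∧
    Y1.card = (n - 1) / 2 ∧ Y2.card = (n - 1) / 2 ∧
    ((∀ a b : V, G0.Adj a b ↔ FAdj xs ys X1 X2 Y1 Y2 a b) ∨
     (∀ a b : V, G0.Adj a b ↔
        (FAdj xs ys X1 X2 Y1 Y2 a b ∨ (a = xs ∧ b = ys) ∨ (a = ys ∧ b = xs))))

/-- in-degree of `w` in the auxiliary digraph `D`: the number of odd `i ∈ [1, 2n-3]`
with `u i w ∈ E(G i)` and `w ≠ u (i+1)`. -/
noncomputable def inDegD (G : ℕ → SimpleGraph V) (n : ℕ) (u : ℕ → V) (w : V) : ℕ :=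
  {i : ℕ | Odd i ∧ 1 ≤ i ∧ i ≤ 2 * n - 3 ∧ (G i).Adj (u i) w ∧ w ≠ u (i + 1)}.ncard

/-!
Take a longest rainbow path `v 0, …, v k`; if `k = 2n - 1` it is Hamiltonian. Otherwise two colours
`c₁ ≠ c₂` are unused, and by maximality every unused-colour neighbour of an end of the path lies on
it. Pósa rotations with `c₁` produce `⌈n/2⌉` far ends of paths on the same vertices, all on the side
of `v k`. None of them is `c₂`-adjacent to a vertex off the path (the path would grow), and, unless a
rainbow cycle with `k + 1` edges exists, none is `c₂`-adjacent to `v 0` (the path would close);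
counting on the side of `v k` then shows that such a cycle `C` exists.

An unused-colour edge leaving `V(C)` would give a path with `k + 1` edges, so by the degree condition
`|C| = n`, `n` is even and every graph of an unused colour is `K_{n/2,n/2} ∪ K_{n/2,n/2}` split along
`V(C)`. Recolouring `C` with the `n` unused colours frees the other `n` colours, which therefore have
the same structure.
-/

lemma card_filter_not_even_range (m : ℕ) : #{i ∈ range m | ¬Even i} = m / 2 := by
  simpa [← even_iff_two_dvd, Nat.even_add_one] using Nat.card_multiples m 2

lemma card_filter_even_range (m : ℕ) : #{i ∈ range m | Even i} = m - m / 2 := by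
  have := card_filter_add_card_filter_not (s := range m) (fun i => Even i)
  rw [card_range, card_filter_not_even_range] at this
  omega

lemma injOn_Iio_succ_ite {α : Type*} {f : ℕ → α} {m : ℕ} {a : α}
    (hf : Set.InjOn f (Set.Iio m)) (ha : ∀ i < m, f i ≠ a) :
    Set.InjOn (fun i => if i = m then a else f i) (Set.Iio (m + 1)) := by
  intro i hi j hj hij
  simp only [Set.mem_Iio] at hi hj
  dsimp only at hij
  split_ifs at hij with him hjm
  · omega
  · exact absurd hij.symm (ha j (by omega))
  · exact absurd hij (ha i (by omega))
  · exact hf (show i < m by omega) (show j < m by omega) hij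

lemma exists_injOn_Iio_mem {α : Type*} [Inhabited α] (U : Finset α) :
    ∃ f : ℕ → α, Set.InjOn f (Set.Iio #U) ∧ ∀ i < #U, f i ∈ U := by
  refine ⟨fun i => if h : i < #U then U.equivFin.symm ⟨i, h⟩ else default, ?_, ?_⟩
  · intro i hi j hj hij
    simp only [Set.mem_Iio] at hi hj
    simpa [hi, hj, Subtype.ext_iff.symm] using hij
  · intro i hi
    simp [hi]

section RainbowPaths

variable {W : Type*} {G : ℕ → SimpleGraph W} {s len : ℕ} {v : ℕ → W} {φ : ℕ → ℕ} {c : ℕ}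

/-- The conditions on the edges shared by `IsRainbowPath` and `IsRainbowCycle`: for a path `h`,
`h.2` is a rainbow walk, for a cycle `h.2.2`. -/
def IsRainbowWalk (G : ℕ → SimpleGraph W) (s len : ℕ) (v : ℕ → W) (φ : ℕ → ℕ) : Prop :=
  Set.InjOn φ (Set.Iio len) ∧ (∀ i < len, 1 ≤ φ i ∧ φ i ≤ s) ∧
  ∀ i < len, (G (φ i)).Adj (v i) (v (i + 1))

def NoRainbowPathLongerThan (G : ℕ → SimpleGraph W) (s k : ℕ) : Prop :=
  ∀ len v φ, IsRainbowPath G s len v φ → len ≤ k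

def freshLabels (s : ℕ) (φ : ℕ → ℕ) (len : ℕ) : Finset ℕ := Icc 1 s \ (range len).image φ

lemma mem_freshLabels : c ∈ freshLabels s φ len ↔ c ∈ Icc 1 s ∧ ∀ i < len, φ i ≠ c := by
  simp [freshLabels]

namespace IsRainbowWalk

lemma image_subset_Icc (h : IsRainbowWalk G s len v φ) : (range len).image φ ⊆ Icc 1 s := by
  intro c hc
  obtain ⟨i, hi, rfl⟩ := mem_image.1 hc
  exact mem_Icc.2 (h.2.1 i (mem_range.1 hi))

lemma card_image (h : IsRainbowWalk G s len v φ) : #((range len).image φ) = len := by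
  rw [card_image_of_injOn (by simpa using h.1), card_range]

lemma length_le (h : IsRainbowWalk G s len v φ) : len ≤ s := by
  simpa [h.card_image] using card_le_card h.image_subset_Icc

lemma card_freshLabels (h : IsRainbowWalk G s len v φ) : #(freshLabels s φ len) = s - len := by
  rw [freshLabels, card_sdiff_of_subset h.image_subset_Icc, h.card_image, Nat.card_Icc,
    Nat.add_sub_cancel]

lemma snoc (h : IsRainbowWalk G s len v φ) (hc : c ∈ freshLabels s φ len) {u : W}
    (hadj : (G c).Adj (v len) u) :
    IsRainbowWalk G s (len + 1) (fun i => if i = len + 1 then u else v i)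
      (fun i => if i = len then c else φ i) := by
  rw [mem_freshLabels, mem_Icc] at hc
  refine ⟨injOn_Iio_succ_ite h.1 hc.2, fun i hi => ?_, fun i hi => ?_⟩
  · by_cases hil : i = len
    · simpa [hil] using hc.1
    · simpa [hil] using h.2.1 i (by omega)
  · by_cases hil : i = len
    · simpa [hil] using hadj
    · simpa [hil, show i ≠ len + 1 by omega] using h.2.2 i (by omega)

end IsRainbowWalk

namespace IsRainbowPath

lemma take {m : ℕ} (h : IsRainbowPath G s len v φ) (hm : m ≤ len) :
    IsRainbowPath G s m v φ :=
  ⟨h.1.mono (Set.Iic_subset_Iic.2 hm), h.2.1.mono (Set.Iio_subset_Iio hm),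
    fun i hi => h.2.2.1 i (by omega), fun i hi => h.2.2.2 i (by omega)⟩

lemma reverse (h : IsRainbowPath G s len v φ) :
    IsRainbowPath G s len (fun i => v (len - i)) (fun i => φ (len - 1 - i)) := by
  obtain ⟨hv, hφ, hrange, hadj⟩ := h
  refine ⟨fun i hi j hj hij => ?_, fun i hi j hj hij => ?_, fun i hi => hrange _ (by omega),
    fun i hi => ?_⟩
  · simp only [Set.mem_Iic] at hi hj
    have := hv (show len - i ≤ len by omega) (show len - j ≤ len by omega) hij
    omega
  · simp only [Set.mem_Iio] at hi hj
    have := hφ (show len - 1 - i < len by omega) (show len - 1 - j < len by omega) hij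
    omega
  · simpa only [show len - 1 - i + 1 = len - i by omega,
      show len - (i + 1) = len - 1 - i by omega] using (hadj (len - 1 - i) (by omega)).symm

lemma close (h : IsRainbowPath G s len v φ) (hc : c ∈ freshLabels s φ len)
    (hadj : (G c).Adj (v len) (v 0)) :
    IsRainbowCycle G s (len + 1) (fun i => if i = len + 1 then v 0 else v i)
      (fun i => if i = len then c else φ i) := by
  refine ⟨?_, by simp, IsRainbowWalk.snoc h.2 hc hadj⟩
  rw [Set.Iio_add_one_eq_Iic]
  exact h.1.congr fun i hi => by simp [show i ≠ len + 1 by simp at hi; omega]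

variable [DecidableEq W]

lemma snoc (h : IsRainbowPath G s len v φ) (hc : c ∈ freshLabels s φ len) {u : W}
    (hu : u ∉ (Iic len).image v) (hadj : (G c).Adj (v len) u) :
    IsRainbowPath G s (len + 1) (fun i => if i = len + 1 then u else v i)
      (fun i => if i = len then c else φ i) := by
  refine ⟨?_, IsRainbowWalk.snoc h.2 hc hadj⟩
  have hv : Set.InjOn v (Set.Iio (len + 1)) := by rw [Set.Iio_add_one_eq_Iic]; exact h.1
  rw [← Set.Iio_add_one_eq_Iic]
  exact injOn_Iio_succ_ite hv fun i hi hvi => hu (mem_image.2 ⟨i, by simp; omega, hvi⟩)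

lemma mem_of_adj_last (hmax : NoRainbowPathLongerThan G s len) (h : IsRainbowPath G s len v φ)
    (hc : c ∈ freshLabels s φ len) {b : W} (hadj : (G c).Adj (v len) b) :
    b ∈ (Iic len).image v := by
  by_contra hb
  have := hmax _ _ _ (h.snoc hc hb hadj)
  omega

lemma mem_of_adj_first (hmax : NoRainbowPathLongerThan G s len) (h : IsRainbowPath G s len v φ)
    (hc : c ∈ freshLabels s φ len) {b : W} (hadj : (G c).Adj (v 0) b) :
    b ∈ (Iic len).image v := by
  have hc' : c ∈ freshLabels s (fun i => φ (len - 1 - i)) len := by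
    rw [mem_freshLabels] at hc ⊢
    exact ⟨hc.1, fun i hi => hc.2 _ (by omega)⟩
  obtain ⟨i, -, rfl⟩ := mem_image.1 (h.reverse.mem_of_adj_last hmax hc' (by simpa using hadj))
  exact mem_image.2 ⟨len - i, by simp, rfl⟩

end IsRainbowPath

lemma exists_longest_rainbowPath (G : ℕ → SimpleGraph W) (s : ℕ) (x : W) :
    ∃ k v φ, IsRainbowPath G s k v φ ∧ NoRainbowPathLongerThan G s k := by
  classical
  let P : ℕ → Prop := fun len => ∃ v φ, IsRainbowPath G s len v φ
  have hP0 : P 0 := ⟨fun _ => x, id, fun i hi j hj _ => by simp_all, by simp, by simp, by simp⟩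
  obtain ⟨v, φ, h⟩ := Nat.findGreatest_spec (Nat.zero_le s) hP0
  exact ⟨_, v, φ, h, fun len v' φ' h' =>
    Nat.le_findGreatest (IsRainbowWalk.length_le h'.2) ⟨v', φ', h'⟩⟩

end RainbowPaths

section Rotations

variable {W : Type*} {G : ℕ → SimpleGraph W} {s m : ℕ} {v : ℕ → W} {φ : ℕ → ℕ} {c : ℕ}

lemma injOn_add_mod (r m : ℕ) : Set.InjOn (fun i => (r + i) % m) (Set.Iio m) := by
  intro i hi j hj hij
  have : i % m = j % m := Nat.ModEq.add_left_cancel' r hij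
  rwa [Nat.mod_eq_of_lt hi, Nat.mod_eq_of_lt hj] at this

namespace IsRainbowCycle

lemma adj_succ_mod (h : IsRainbowCycle G s m v φ) {j : ℕ} (hj : j < m) :
    (G (φ j)).Adj (v j) (v ((j + 1) % m)) := by
  rcases (show j + 1 < m ∨ j + 1 = m by omega) with hlt | heq
  · simpa [Nat.mod_eq_of_lt hlt] using h.2.2.2.2 j hj
  · simpa [heq, h.2.1] using h.2.2.2.2 j hj

lemma toPath (h : IsRainbowCycle G s m v φ) {r : ℕ} (hr : r < m) :
    IsRainbowPath G s (m - 1) (fun i => v ((r + i) % m)) (fun i => φ ((r + i) % m)) := by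
  have hmaps : Set.MapsTo (fun i => (r + i) % m) (Set.Iic (m - 1)) (Set.Iio m) :=
    fun i _ => Nat.mod_lt _ (by omega)
  have hinj : Set.InjOn (fun i => (r + i) % m) (Set.Iic (m - 1)) :=
    (injOn_add_mod r m).mono fun i hi => by simp at hi ⊢; omega
  refine ⟨h.1.comp hinj hmaps, (h.2.2.1.comp hinj hmaps).mono fun i hi => by simp at hi ⊢; omega,
    fun i hi => h.2.2.2.1 _ (Nat.mod_lt _ (by omega)), fun i hi => ?_⟩
  have := h.adj_succ_mod (Nat.mod_lt (r + i) (show 0 < m by omega))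
  rwa [Nat.mod_add_mod, add_assoc] at this

variable [DecidableEq W]

lemma mem_of_adj (hmax : NoRainbowPathLongerThan G s (m - 1)) (h : IsRainbowCycle G s m v φ)
    (hc : c ∈ freshLabels s φ m) {r : ℕ} (hr : r < m) {b : W} (hadj : (G c).Adj (v r) b) :
    b ∈ (range m).image v := by
  have hc' : c ∈ freshLabels s (fun i => φ ((r + i) % m)) (m - 1) := by
    rw [mem_freshLabels] at hc ⊢
    exact ⟨hc.1, fun i _ => hc.2 _ (Nat.mod_lt _ (by omega))⟩
  obtain ⟨i, -, rfl⟩ := mem_image.1 <|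
    (h.toPath hr).mem_of_adj_first hmax hc' (by simpa [Nat.mod_eq_of_lt hr] using hadj)
  exact mem_image.2 ⟨_, mem_range.2 (Nat.mod_lt _ (by omega)), rfl⟩

end IsRainbowCycle

def segmentFlip (j k i : ℕ) : ℕ := if i ≤ j then i else k + j + 1 - i

lemma segmentFlip_leftInvOn (j k : ℕ) :
    Set.LeftInvOn (segmentFlip j k) (segmentFlip j k) (Set.Iic k) := fun i hi => by
  simp only [Set.mem_Iic] at hi
  simp only [segmentFlip]
  split_ifs <;> omega

lemma segmentFlip_mapsTo (j k : ℕ) : Set.MapsTo (segmentFlip j k) (Set.Iic k) (Set.Iic k) :=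
  fun i hi => by
    simp only [Set.mem_Iic, segmentFlip] at hi ⊢
    split_ifs <;> omega

lemma image_segmentFlip_Iic (j k : ℕ) : (Iic k).image (segmentFlip j k) = Iic k := by
  ext t
  simp only [mem_image, mem_Iic]
  exact ⟨fun ⟨i, hi, hit⟩ => hit ▸ segmentFlip_mapsTo j k (Set.mem_Iic.2 hi),
    fun ht => ⟨segmentFlip j k t, segmentFlip_mapsTo j k ht, segmentFlip_leftInvOn j k ht⟩⟩

lemma IsRainbowPath.posaRotate [DecidableEq W] {k : ℕ} (h : IsRainbowPath G s k v φ) {j : ℕ}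
    (hj : j + 1 < k) (hc : c ∈ freshLabels s φ k) (hadj : (G c).Adj (v k) (v j)) :
    ∃ v' φ', IsRainbowPath G s k v' φ' ∧ v' 0 = v 0 ∧ v' k = v (j + 1) ∧
      (Iic k).image v' = (Iic k).image v ∧
      ∀ d ∈ freshLabels s φ k, d ≠ c → d ∈ freshLabels s φ' k := by
  obtain ⟨hv, hφ, hrange, hadjs⟩ := h
  rw [mem_freshLabels] at hc
  -- the new `i`-th edge is the old `τ i`-th one, except for the edge `v j – v k` of colour `c`
  set τ : ℕ → ℕ := fun i => if i < j then i else k + j - i with hτ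
  have hτk : ∀ i < k, i ≠ j → τ i < k := fun i hi hij => by simp only [hτ]; split_ifs <;> omega
  refine ⟨v ∘ segmentFlip j k, fun i => if i = j then c else φ (τ i),
    ⟨hv.comp (segmentFlip_leftInvOn j k).injOn (segmentFlip_mapsTo j k),
      fun i hi i' hi' he => ?_, fun i hi => ?_, fun i hi => ?_⟩,
    by simp [segmentFlip],
    by simp [segmentFlip, show ¬k ≤ j by omega, show k + j + 1 - k = j + 1 by omega],
    by rw [← image_image, image_segmentFlip_Iic], fun d hd hdc => ?_⟩
  · simp only [Set.mem_Iio] at hi hi'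
    dsimp only at he
    split_ifs at he with h1 h2 h2
    · omega
    · exact absurd he.symm (hc.2 _ (hτk i' hi' h2))
    · exact absurd he (hc.2 _ (hτk i hi h1))
    · have := hφ (hτk i hi h1) (hτk i' hi' h2) he
      simp only [hτ] at this
      split_ifs at this <;> omega
  · dsimp only
    split_ifs with hij
    · simpa using hc.1
    · exact hrange _ (hτk i hi hij)
  · simp only [Function.comp_apply, segmentFlip, hτ]
    rcases lt_trichotomy i j with hij | rfl | hij
    · simpa [hij, hij.le, hij.ne, Nat.succ_le_of_lt hij] using hadjs i (by omega)
    · simpa [show k + i + 1 - (i + 1) = k by omega] using hadj.symm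
    · simpa [hij.ne', show ¬i ≤ j by omega, show ¬i + 1 ≤ j by omega, show ¬i < j by omega,
        show k + j + 1 - i = k + j - i + 1 by omega, show k + j + 1 - (i + 1) = k + j - i by omega]
        using (hadjs (k + j - i) (by omega)).symm
  · rw [mem_freshLabels] at hd ⊢
    refine ⟨hd.1, fun i hi => ?_⟩
    split_ifs with hij
    · exact Ne.symm hdc
    · exact hd.2 _ (hτk i hi hij)

end Rotations

section Bipartite

variable {W : Type*} {G : ℕ → SimpleGraph W} {s len : ℕ} {v : ℕ → W} {φ : ℕ → ℕ}
  {X Y : Finset W}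

structure IsBipartiteFamily (G : ℕ → SimpleGraph W) (s : ℕ) (X Y : Finset W) : Prop where
  disjoint : Disjoint X Y
  cover : ∀ w, w ∈ X ∨ w ∈ Y
  adj : ∀ i, 1 ≤ i → i ≤ s → ∀ a b, (G i).Adj a b → (a ∈ X ∧ b ∈ Y) ∨ (a ∈ Y ∧ b ∈ X)

namespace IsBipartiteFamily

lemma symm (hG : IsBipartiteFamily G s X Y) : IsBipartiteFamily G s Y X :=
  ⟨hG.disjoint.symm, fun w => (hG.cover w).symm,
    fun i hi hi' a b hab => (hG.adj i hi hi' a b hab).symm⟩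

lemma mem_right_iff (hG : IsBipartiteFamily G s X Y) (a : W) : a ∈ Y ↔ a ∉ X :=
  ⟨fun hY hX => disjoint_left.1 hG.disjoint hX hY, (hG.cover a).resolve_left⟩

lemma mem_iff_of_adj (hG : IsBipartiteFamily G s X Y) {c : ℕ} (hc : c ∈ Icc 1 s) {a b : W}
    (hab : (G c).Adj a b) : b ∈ X ↔ a ∉ X := by
  rw [mem_Icc] at hc
  have := hG.adj c hc.1 hc.2 a b hab
  have := hG.mem_right_iff a
  have := hG.mem_right_iff b
  tauto

lemma mem_iff_even (hG : IsBipartiteFamily G s X Y) (h : IsRainbowWalk G s len v φ) :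
    ∀ i ≤ len, (v i ∈ X ↔ (Even i ↔ v 0 ∈ X)) := by
  intro i hi
  induction i with
  | zero => simp
  | succ i ih =>
    rw [hG.mem_iff_of_adj (mem_Icc.2 (h.2.1 i hi)) (h.2.2 i hi), ih (by omega), Nat.even_add_one]
    tauto

end IsBipartiteFamily

variable [DecidableEq W]

lemma IsRainbowPath.card_image_inter_le (hG : IsBipartiteFamily G s X Y)
    (h : IsRainbowPath G s len v φ) (h0 : v 0 ∉ X) : #((Iic len).image v ∩ X) ≤ (len + 1) / 2 := by
  have hsub : (Iic len).image v ∩ X ⊆ {i ∈ range (len + 1) | ¬Even i}.image v := by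
    intro b hb
    simp only [mem_inter, mem_image] at hb
    obtain ⟨⟨i, hi, rfl⟩, hiX⟩ := hb
    rw [mem_Iic] at hi
    have := (hG.mem_iff_even h.2 i hi).1 hiX
    exact mem_image.2 ⟨i, mem_filter.2 ⟨mem_range.2 (by omega), by tauto⟩, rfl⟩
  calc #((Iic len).image v ∩ X) ≤ #({i ∈ range (len + 1) | ¬Even i}.image v) := card_le_card hsub
    _ ≤ #{i ∈ range (len + 1) | ¬Even i} := card_image_le
    _ = (len + 1) / 2 := card_filter_not_even_range _

namespace IsRainbowCycle

lemma even_length (hG : IsBipartiteFamily G s X Y) (h : IsRainbowCycle G s len v φ) :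
    Even len := by
  have := hG.mem_iff_even h.2.2 len le_rfl
  rw [h.2.1] at this
  tauto

lemma card_inter_image (hG : IsBipartiteFamily G s X Y) (h : IsRainbowCycle G s len v φ) :
    #(X ∩ (range len).image v) = len / 2 := by
  have hfilter : X ∩ (range len).image v = {i ∈ range len | Even i ↔ v 0 ∈ X}.image v := by
    ext b
    simp only [mem_inter, mem_image, mem_filter, mem_range]
    constructor
    · rintro ⟨hiX, i, hi, rfl⟩
      exact ⟨i, ⟨hi, (hG.mem_iff_even h.2.2 i hi.le).1 hiX⟩, rfl⟩
    · rintro ⟨i, ⟨hi, hiX⟩, rfl⟩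
      exact ⟨(hG.mem_iff_even h.2.2 i hi.le).2 hiX, i, hi, rfl⟩
  rw [hfilter, card_image_of_injOn (h.1.mono fun i hi => by simpa using (mem_filter.1 hi).1)]
  obtain ⟨t, rfl⟩ := h.even_length hG
  by_cases h0 : v 0 ∈ X
  · simp only [h0, iff_true, card_filter_even_range]
    omega
  · simp only [h0, iff_false, card_filter_not_even_range]

end IsRainbowCycle

end Bipartite

section CycleStructure

variable {W : Type*} {G : ℕ → SimpleGraph W} {s n m d c : ℕ} {X Y : Finset W} {w : ℕ → W}
  {ψ : ℕ → ℕ}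

def MinDegreeGE (G : ℕ → SimpleGraph W) (s d : ℕ) : Prop :=
  ∀ i, 1 ≤ i → i ≤ s → ∀ a : W, d ≤ ((G i).neighborSet a).ncard

namespace MinDegreeGE

lemma le_card (hdeg : MinDegreeGE G s d) (hc : c ∈ Icc 1 s) {a : W} {t : Finset W}
    (ht : ∀ b, (G c).Adj a b → b ∈ t) : d ≤ #t := by
  rw [mem_Icc] at hc
  calc d ≤ ((G c).neighborSet a).ncard := hdeg c hc.1 hc.2 a
    _ ≤ (t : Set W).ncard := Set.ncard_le_ncard (fun b hb => ht b hb) t.finite_toSet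
    _ = #t := Set.ncard_coe_finset t

lemma adj_iff (hdeg : MinDegreeGE G s d) (hc : c ∈ Icc 1 s) {a : W} {t : Finset W}
    (ht : ∀ b, (G c).Adj a b → b ∈ t) (hcard : #t ≤ d) (b : W) : (G c).Adj a b ↔ b ∈ t := by
  have heq : (G c).neighborSet a = t := by
    refine Set.eq_of_subset_of_ncard_le (fun b hb => ht b hb) ?_ t.finite_toSet
    rw [mem_Icc] at hc
    rw [Set.ncard_coe_finset]
    exact hcard.trans (hdeg c hc.1 hc.2 a)
  exact Set.ext_iff.1 heq b

end MinDegreeGE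

variable [DecidableEq W]

/-- The neighbourhood of `a` in `K_{X ∩ A, Y ∩ A} ∪ K_{X \ A, Y \ A}`. -/
def oppBlock (X Y A : Finset W) (a : W) : Finset W :=
  {b ∈ if a ∈ X then Y else X | b ∈ A ↔ a ∈ A}

lemma card_oppBlock (hX : #X = n) (hY : #Y = n) {A : Finset W} {t : ℕ} (hXA : #(X ∩ A) = t)
    (hYA : #(Y ∩ A) = t) (a : W) : #(oppBlock X Y A a) = if a ∈ A then t else n - t := by
  have := card_inter_add_card_sdiff X A
  have := card_inter_add_card_sdiff Y A
  by_cases ha : a ∈ A <;> by_cases haX : a ∈ X <;>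
    simp only [oppBlock, ha, haX, if_true, if_false, iff_true, iff_false, filter_mem_eq_inter,
      filter_notMem_eq_sdiff] <;> omega

lemma allTwoCompleteBip_of_adj_iff (hG : IsBipartiteFamily G s X Y) (hX : #X = n) (hY : #Y = n)
    (hn : Even n) {A : Finset W} (hXA : #(X ∩ A) = n / 2) (hYA : #(Y ∩ A) = n / 2)
    (hadj : ∀ c ∈ Icc 1 s, ∀ a b, (G c).Adj a b ↔ b ∈ oppBlock X Y A a) :
    AllTwoCompleteBip G s n X Y := by
  have := card_inter_add_card_sdiff X A
  have := card_inter_add_card_sdiff Y A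
  obtain ⟨t, rfl⟩ := hn
  refine ⟨X ∩ A, X \ A, Y ∩ A, Y \ A, (disjoint_sdiff_inter X A).symm,
    (disjoint_sdiff_inter Y A).symm, sup_inf_sdiff X A, sup_inf_sdiff Y A, hXA, by omega,
    hYA, by omega, fun i hi hi' a b => ?_⟩
  rw [hadj i (mem_Icc.2 ⟨hi, hi'⟩)]
  have := hG.mem_right_iff a
  have := hG.mem_right_iff b
  simp only [oppBlock, mem_filter, mem_inter, mem_sdiff]
  split_ifs <;> tauto

namespace IsRainbowCycle

lemma mem_oppBlock_of_adj (hG : IsBipartiteFamily G s X Y)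
    (hmax : NoRainbowPathLongerThan G s (m - 1)) (h : IsRainbowCycle G s m w ψ)
    (hc : c ∈ freshLabels s ψ m) {a b : W} (hab : (G c).Adj a b) :
    b ∈ oppBlock X Y ((range m).image w) a := by
  have hside := hG.mem_iff_of_adj (mem_freshLabels.1 hc).1 hab
  have hb := hG.mem_right_iff b
  have hA : ∀ {a b : W}, (G c).Adj a b → a ∈ (range m).image w → b ∈ (range m).image w := by
    intro a b hab ha
    obtain ⟨r, hr, rfl⟩ := mem_image.1 ha
    exact h.mem_of_adj hmax hc (mem_range.1 hr) hab
  simp only [oppBlock, mem_filter]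
  exact ⟨by split_ifs <;> tauto, ⟨hA hab.symm, hA hab⟩⟩

lemma succ_mem_oppBlock (hG : IsBipartiteFamily G s X Y) (h : IsRainbowCycle G s m w ψ) {i : ℕ}
    (hi : i < m) : w (i + 1) ∈ oppBlock X Y ((range m).image w) (w i) := by
  have hside := hG.mem_iff_of_adj (mem_Icc.2 (h.2.2.2.1 i hi)) (h.2.2.2.2 i hi)
  have hb := hG.mem_right_iff (w (i + 1))
  have hsucc : w (i + 1) ∈ (range m).image w := by
    rcases (show i + 1 < m ∨ i + 1 = m by omega) with hlt | heq
    · exact mem_image_of_mem w (mem_range.2 hlt)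
    · rw [heq, h.2.1]
      exact mem_image_of_mem w (mem_range.2 (by omega))
  simp only [oppBlock, mem_filter]
  exact ⟨by split_ifs <;> tauto, iff_of_true hsucc (mem_image_of_mem w (mem_range.2 hi))⟩

lemma adj_iff_mem_oppBlock (hG : IsBipartiteFamily G (2 * n) X Y) (hX : #X = n) (hY : #Y = n)
    (hdeg : MinDegreeGE G (2 * n) ((n + 1) / 2)) (hmax : NoRainbowPathLongerThan G (2 * n) (m - 1))
    (h : IsRainbowCycle G (2 * n) m w ψ) (hm : 0 < m) (hm' : m < 2 * n) :
    Even n ∧ m = n ∧ ∀ c ∈ freshLabels (2 * n) ψ m, ∀ a b,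
      (G c).Adj a b ↔ b ∈ oppBlock X Y ((range m).image w) a := by
  set A := (range m).image w
  have hcard := card_oppBlock hX hY (h.card_inter_image hG) (h.card_inter_image hG.symm)
  have hA : #A = m := by rw [card_image_of_injOn (by simpa using h.1), card_range]
  obtain ⟨c₀, hc₀⟩ : (freshLabels (2 * n) ψ m).Nonempty := by
    rw [← card_pos, IsRainbowWalk.card_freshLabels h.2.2]
    omega
  have hlow : ∀ a, (n + 1) / 2 ≤ #(oppBlock X Y A a) := fun a =>
    hdeg.le_card (mem_freshLabels.1 hc₀).1 fun b hab => h.mem_oppBlock_of_adj hG hmax hc₀ hab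
  obtain ⟨u, -, hu⟩ : ∃ u ∈ X ∪ Y, u ∉ A := by
    refine exists_mem_notMem_of_card_lt_card ?_
    rw [card_union_of_disjoint hG.disjoint]
    omega
  have h₁ := hlow (w 0)
  have h₂ := hlow u
  rw [hcard, if_pos (mem_image_of_mem w (mem_range.2 hm))] at h₁
  rw [hcard, if_neg hu] at h₂
  have hmn : m = n ∧ n % 2 = 0 := by
    have := Nat.even_iff.1 (h.even_length hG)
    omega
  refine ⟨Nat.even_iff.2 hmn.2, hmn.1, fun c hc a b => ?_⟩
  refine hdeg.adj_iff (mem_freshLabels.1 hc).1 (fun b hab => h.mem_oppBlock_of_adj hG hmax hc hab)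
    ?_ b
  rw [hcard]
  split_ifs <;> omega

lemma allTwoCompleteBip (hG : IsBipartiteFamily G (2 * n) X Y) (hX : #X = n) (hY : #Y = n)
    (hdeg : MinDegreeGE G (2 * n) ((n + 1) / 2)) (hmax : NoRainbowPathLongerThan G (2 * n) (m - 1))
    (h : IsRainbowCycle G (2 * n) m w ψ) (hm : 0 < m) (hm' : m < 2 * n) :
    Even n ∧ AllTwoCompleteBip G (2 * n) n X Y := by
  obtain ⟨hn, hmn, hfresh⟩ := h.adj_iff_mem_oppBlock hG hX hY hdeg hmax hm hm'
  set U := freshLabels (2 * n) ψ m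
  have hU : #U = m := by rw [IsRainbowWalk.card_freshLabels h.2.2]; omega
  -- recolour the cycle with the unused colours, so that the used ones become unused
  obtain ⟨ψ', hψ'inj, hψ'U⟩ := exists_injOn_Iio_mem U
  rw [hU] at hψ'inj hψ'U
  have h' : IsRainbowCycle G (2 * n) m w ψ' :=
    ⟨h.1, h.2.1, hψ'inj, fun i hi => mem_Icc.1 (mem_freshLabels.1 (hψ'U i hi)).1,
      fun i hi => (hfresh _ (hψ'U i hi) _ _).2 (h.succ_mem_oppBlock hG hi)⟩
  obtain ⟨-, -, hfresh'⟩ := h'.adj_iff_mem_oppBlock hG hX hY hdeg hmax hm hm'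
  refine ⟨hn, allTwoCompleteBip_of_adj_iff hG hX hY hn (A := (range m).image w) ?_ ?_
    fun c hc => ?_⟩
  · rw [h.card_inter_image hG, hmn]
  · rw [h.card_inter_image hG.symm, hmn]
  · by_cases hcU : c ∈ U
    · exact hfresh c hcU
    · exact hfresh' c (mem_freshLabels.2 ⟨hc, fun i hi he => hcU (he ▸ hψ'U i hi)⟩)

end IsRainbowCycle

end CycleStructure

section Posa

variable {W : Type*} [DecidableEq W] {G : ℕ → SimpleGraph W} {s n k d : ℕ} {v : ℕ → W}
  {φ : ℕ → ℕ} {X Y : Finset W}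

def IsRotationEnd (G : ℕ → SimpleGraph W) (s k : ℕ) (v : ℕ → W) (c : ℕ) (b : W) : Prop :=
  ∃ v' φ', IsRainbowPath G s k v' φ' ∧ v' 0 = v 0 ∧ v' k = b ∧
    (Iic k).image v' = (Iic k).image v ∧ c ∈ freshLabels s φ' k

lemma IsRainbowPath.exists_rotationEnds (hmax : NoRainbowPathLongerThan G s k)
    (h : IsRainbowPath G s k v φ) (hdeg : MinDegreeGE G s d) {c₁ c₂ : ℕ}
    (hc₁ : c₁ ∈ freshLabels s φ k) (hc₂ : c₂ ∈ freshLabels s φ k) (hne : c₁ ≠ c₂) :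
    ∃ S : Finset W, d ≤ #S ∧ v 0 ∉ S ∧ ∀ b ∈ S, IsRotationEnd G s k v c₂ b := by
  classical
  set J := {j ∈ range k | (G c₁).Adj (v k) (v j)}
  have hJ : ∀ j ∈ J, j < k ∧ (G c₁).Adj (v k) (v j) := fun j hj => by
    simpa using (mem_filter.1 hj)
  refine ⟨J.image (fun j => v (j + 1)), ?_, fun hv0 => ?_, fun b hb => ?_⟩
  · have hdJ : d ≤ #(J.image v) := hdeg.le_card (mem_freshLabels.1 hc₁).1 fun b hb => by
      obtain ⟨i, hi, rfl⟩ := mem_image.1 (h.mem_of_adj_last hmax hc₁ hb)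
      have : i ≠ k := by rintro rfl; exact hb.ne rfl
      exact mem_image_of_mem v (mem_filter.2 ⟨mem_range.2 (by simp at hi; omega), hb⟩)
    have hinj : Set.InjOn (fun j => v (j + 1)) J := fun i hi j hj hij => by
      simpa using h.1 (show i + 1 ≤ k by have := (hJ i hi).1; omega)
        (show j + 1 ≤ k by have := (hJ j hj).1; omega) hij
    rw [card_image_of_injOn hinj]
    exact hdJ.trans card_image_le
  · obtain ⟨j, hj, he⟩ := mem_image.1 hv0
    have := h.1 (show j + 1 ≤ k by have := (hJ j hj).1; omega) (show 0 ≤ k by omega) he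
    omega
  · obtain ⟨j, hj, rfl⟩ := mem_image.1 hb
    obtain ⟨hjk, hadj⟩ := hJ j hj
    by_cases hlast : j + 1 = k
    · exact ⟨v, φ, h, rfl, by rw [hlast], rfl, hc₂⟩
    · obtain ⟨v', φ', h', h0, hk, himg, hfresh⟩ := h.posaRotate (by omega) hc₁ hadj
      exact ⟨v', φ', h', h0, hk, himg, hfresh c₂ hc₂ hne.symm⟩

namespace IsRotationEnd

variable {c : ℕ} {b : W}

lemma mem_image (hb : IsRotationEnd G s k v c b) : b ∈ (Iic k).image v := by
  obtain ⟨v', -, -, -, rfl, himg, -⟩ := hb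
  exact himg ▸ mem_image_of_mem v' (mem_Iic.2 le_rfl)

lemma mem_iff (hG : IsBipartiteFamily G s X Y) (h : IsRainbowPath G s k v φ)
    (hb : IsRotationEnd G s k v c b) : b ∈ X ↔ v k ∈ X := by
  obtain ⟨v', φ', h', h0, rfl, -, -⟩ := hb
  rw [hG.mem_iff_even h'.2 k le_rfl, hG.mem_iff_even h.2 k le_rfl, h0]

lemma not_adj_of_notMem (hmax : NoRainbowPathLongerThan G s k) (hb : IsRotationEnd G s k v c b)
    {y : W} (hy : y ∉ (Iic k).image v) : ¬(G c).Adj b y := by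
  obtain ⟨v', φ', h', -, rfl, himg, hc⟩ := hb
  exact fun hadj => hy (himg ▸ h'.mem_of_adj_last hmax hc hadj)

lemma not_adj_start (hnc : ∀ w ψ, ¬IsRainbowCycle G s (k + 1) w ψ)
    (hb : IsRotationEnd G s k v c b) : ¬(G c).Adj b (v 0) := by
  obtain ⟨v', φ', h', h0, rfl, -, hc⟩ := hb
  exact fun hadj => hnc _ _ (h'.close hc (h0 ▸ hadj))

end IsRotationEnd

namespace IsRainbowPath

lemma card_rotationEnds_add_le_card (hG : IsBipartiteFamily G s X Y)
    (hmax : NoRainbowPathLongerThan G s k) (h : IsRainbowPath G s k v φ) (hdeg : MinDegreeGE G s d)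
    {c : ℕ} (hc : c ∈ freshLabels s φ k) {S : Finset W} (hS0 : v 0 ∉ S) (hSX : S ⊆ X)
    (hS : ∀ b ∈ S, IsRotationEnd G s k v c b) (h0 : v 0 ∈ X) {y : W} (hyY : y ∈ Y)
    (hy : y ∉ (Iic k).image v) : #S + d + 1 ≤ #X := by
  classical
  have hc' := (mem_freshLabels.1 hc).1
  set T := {b ∈ X | (G c).Adj y b}
  have hT : d ≤ #T := hdeg.le_card hc' fun b hb =>
    mem_filter.2 ⟨(hG.mem_iff_of_adj hc' hb).2 ((hG.mem_right_iff y).1 hyY), hb⟩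
  have hST : Disjoint S T := disjoint_left.2 fun b hbS hbT =>
    (hS b hbS).not_adj_of_notMem hmax hy (mem_filter.1 hbT).2.symm
  have hT0 : v 0 ∉ S ∪ T :=
    notMem_union.2 ⟨hS0, fun hv0 => hy (h.mem_of_adj_first hmax hc (mem_filter.1 hv0).2.symm)⟩
  have hTX : T ⊆ X := filter_subset _ X
  have := card_le_card (insert_subset h0 (union_subset hSX hTX))
  rw [card_insert_of_notMem hT0, card_union_of_disjoint hST] at this
  omega

lemma card_rotationEnds_add_le_card_inter (hG : IsBipartiteFamily G s X Y)
    (hmax : NoRainbowPathLongerThan G s k) (h : IsRainbowPath G s k v φ) (hdeg : MinDegreeGE G s d)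
    (hnc : ∀ w ψ, ¬IsRainbowCycle G s (k + 1) w ψ) {c : ℕ} (hc : c ∈ freshLabels s φ k)
    {S : Finset W} (hSX : S ⊆ X) (hS : ∀ b ∈ S, IsRotationEnd G s k v c b) (h0 : v 0 ∉ X) :
    #S + d ≤ #((Iic k).image v ∩ X) := by
  classical
  have hc' := (mem_freshLabels.1 hc).1
  set T := {b ∈ (Iic k).image v ∩ X | (G c).Adj (v 0) b}
  have hT : d ≤ #T := hdeg.le_card hc' fun b hb =>
    mem_filter.2 ⟨mem_inter.2 ⟨h.mem_of_adj_first hmax hc hb, (hG.mem_iff_of_adj hc' hb).2 h0⟩, hb⟩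
  have hST : Disjoint S T := disjoint_left.2 fun b hbS hbT =>
    (hS b hbS).not_adj_start hnc (mem_filter.1 hbT).2.symm
  have hSP : S ⊆ (Iic k).image v ∩ X := fun b hb => mem_inter.2 ⟨(hS b hb).mem_image, hSX hb⟩
  have hTP : T ⊆ (Iic k).image v ∩ X := filter_subset _ _
  have := card_le_card (union_subset hSP hTP)
  rw [card_union_of_disjoint hST] at this
  omega

lemma exists_rainbowCycle (hG : IsBipartiteFamily G (2 * n) X Y) (hX : #X = n) (hY : #Y = n)
    (hdeg : MinDegreeGE G (2 * n) ((n + 1) / 2)) (hmax : NoRainbowPathLongerThan G (2 * n) k)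
    (h : IsRainbowPath G (2 * n) k v φ) (hk : k + 1 < 2 * n) :
    ∃ w ψ, IsRainbowCycle G (2 * n) (k + 1) w ψ := by
  wlog hvk : v k ∈ X generalizing X Y
  · exact this hG.symm hY hX ((hG.mem_right_iff _).2 hvk)
  by_contra! hnc
  obtain ⟨c₁, hc₁, c₂, hc₂, hne⟩ := one_lt_card.1 <| show 1 < #(freshLabels (2 * n) φ k) by
    rw [IsRainbowWalk.card_freshLabels h.2]
    omega
  obtain ⟨S, hS, hS0, hSend⟩ := h.exists_rotationEnds hmax hdeg hc₁ hc₂ hne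
  have hSX : S ⊆ X := fun b hb => ((hSend b hb).mem_iff hG h).2 hvk
  by_cases h0 : v 0 ∈ X
  · obtain ⟨y, hyY, hy⟩ : ∃ y ∈ Y, y ∉ (Iic k).image v ∩ Y := by
      refine exists_mem_notMem_of_card_lt_card ?_
      have := h.card_image_inter_le hG.symm ((hG.mem_right_iff _).not.2 (not_not.2 h0))
      omega
    have := h.card_rotationEnds_add_le_card hG hmax hdeg hc₂ hS0 hSX hSend h0 hyY
      fun hyP => hy (mem_inter.2 ⟨hyP, hyY⟩)
    omega
  · have := h.card_rotationEnds_add_le_card_inter hG hmax hdeg hnc hc₂ hSX hSend h0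
    have := h.card_image_inter_le hG h0
    omega

end IsRainbowPath

end Posa

lemma IsRainbowPath.hasRainbowHamPath {W : Type*} [DecidableEq W] {G : ℕ → SimpleGraph W}
    {s n : ℕ} {v : ℕ → W} {φ : ℕ → ℕ} {X Y : Finset W} (hdisj : Disjoint X Y)
    (hcov : ∀ w, w ∈ X ∨ w ∈ Y) (hX : #X = n) (hY : #Y = n) (hn : 0 < n)
    (h : IsRainbowPath G s (2 * n - 1) v φ) : HasRainbowHamPath G s n := by
  have himg : (Iic (2 * n - 1)).image v = X ∪ Y := by
    refine eq_of_subset_of_card_le (fun a _ => by simpa using hcov a) ?_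
    rw [card_union_of_disjoint hdisj, card_image_of_injOn (by simpa using h.1), Nat.card_Iic]
    omega
  refine ⟨v, φ, h, fun a => ?_⟩
  obtain ⟨i, hi, rfl⟩ := mem_image.1 (himg ▸ (by simpa using hcov a) : a ∈ (Iic (2 * n - 1)).image v)
  exact ⟨i, mem_Iic.1 hi, rfl⟩

theorem stmt17 (n : ℕ) (G : ℕ → SimpleGraph V) (X Y : Finset V)
    (hdisj : Disjoint X Y) (hcov : ∀ w : V, w ∈ X ∨ w ∈ Y)
    (hX : X.card = n) (hY : Y.card = n)
    (hbip : ∀ i, 1 ≤ i → i ≤ 2 * n → ∀ a b : V, (G i).Adj a b →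
      (a ∈ X ∧ b ∈ Y) ∨ (a ∈ Y ∧ b ∈ X))
    (hdeg : ∀ i, 1 ≤ i → i ≤ 2 * n → ∀ a : V, (n + 1) / 2 ≤ ((G i).neighborSet a).ncard) :
    HasRainbowHamPath G (2 * n) n ∨
      (Even n ∧ AllTwoCompleteBip G (2 * n) n X Y) := by
  rcases Nat.eq_zero_or_pos n with rfl | hn
  · refine Or.inr ⟨even_two_mul 0, ∅, ∅, ∅, ∅, disjoint_empty_left _, disjoint_empty_left _, ?_, ?_,
      rfl, rfl, rfl, rfl, fun i hi hi' => by omega⟩ <;> simp_all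
  have hG : IsBipartiteFamily G (2 * n) X Y := ⟨hdisj, hcov, hbip⟩
  obtain ⟨x, -⟩ := card_pos.1 (show 0 < #X by omega)
  obtain ⟨k, v, φ, h, hmax⟩ := exists_longest_rainbowPath G (2 * n) x
  by_cases hk : 2 * n - 1 ≤ k
  · exact Or.inl ((h.take hk).hasRainbowHamPath hdisj hcov hX hY hn)
  obtain ⟨w, ψ, hC⟩ := h.exists_rainbowCycle hG hX hY hdeg hmax (by omega)
  exact Or.inr (hC.allTwoCompleteBip hG hX hY hdeg (by simpa using hmax) (by omega) (by omega))
end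

section
/- Let n ≥ 3 and let G = {G_1, ..., G_{2n-1}} be bipartite graphs on bipartition (X, Y), |X| = |Y| = n, with δ(G_i) ≥ ⌈n/2⌉ for all i. Suppose P = u_1 u_2 ... u_p is a partial G-transversal path of maximum order with p < 2n-2, with associated injection φ, u_1 ∈ X, and m_1, m_2 are two distinct indices not in im(φ). Fix y' ∈ Y \ V(P). Define S_1 = {s ∈ [p-1] : u_1 u_{s+1} ∈ E(G_{m_1})} and S_2 = {s ∈ [p-1] : y' u_s ∈ E(G_{m_2})}. Then S_1 ∩ S_2 = ∅; moreover n is even, d_{G_{m_2}}(y') = n/2, and G_{m_2}[X \ V(P), Y \ V(P)] is a complete bipartite graph. -/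
open Finset

variable {V : Type*} [DecidableEq V]

theorem stmt19 (n : ℕ) (hn : 3 ≤ n) (G : ℕ → SimpleGraph V) (X Y : Finset V)
    (hdisj : Disjoint X Y) (hcov : ∀ w : V, w ∈ X ∨ w ∈ Y)
    (hX : X.card = n) (hY : Y.card = n)
    (hbip : ∀ i, 1 ≤ i → i ≤ 2 * n - 1 → ∀ a b : V, (G i).Adj a b →
      (a ∈ X ∧ b ∈ Y) ∨ (a ∈ Y ∧ b ∈ X))
    (hdeg : ∀ i, 1 ≤ i → i ≤ 2 * n - 1 → ∀ a : V, (n + 1) / 2 ≤ ((G i).neighborSet a).ncard)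
    (p : ℕ) (hp2 : 2 ≤ p) (hplt : p < 2 * n - 2)
    (v : ℕ → V) (φ : ℕ → ℕ)
    (hpath : IsRainbowPath G (2 * n - 1) (p - 1) v φ)
    (hmax : ∀ (v' : ℕ → V) (φ' : ℕ → ℕ) (len : ℕ),
      IsRainbowPath G (2 * n - 1) len v' φ' → len ≤ p - 1)
    (hstart : v 0 ∈ X)
    (m1 m2 : ℕ) (hm12 : m1 ≠ m2)
    (hm1 : 1 ≤ m1 ∧ m1 ≤ 2 * n - 1) (hm2 : 1 ≤ m2 ∧ m2 ≤ 2 * n - 1)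
    (hm1not : ∀ i < p - 1, φ i ≠ m1) (hm2not : ∀ i < p - 1, φ i ≠ m2)
    (y' : V) (hy' : y' ∈ Y) (hy'P : ∀ i ≤ p - 1, v i ≠ y') :
    ({s : ℕ | 1 ≤ s ∧ s ≤ p - 1 ∧ (G m1).Adj (v 0) (v s)} ∩
     {s : ℕ | 1 ≤ s ∧ s ≤ p - 1 ∧ (G m2).Adj y' (v (s - 1))} = ∅) ∧
    Even n ∧ ((G m2).neighborSet y').ncard = n / 2 ∧
    (∀ a ∈ X, (∀ i ≤ p - 1, v i ≠ a) → ∀ b ∈ Y, (∀ i ≤ p - 1, v i ≠ b) →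
      (G m2).Adj a b) := by
  classical
  obtain ⟨hvinj, hφinj, hφbd, hadj⟩ := hpath
  have hfinV : Finite V := by
    have hmem : ∀ w : V, w ∈ (X ∪ Y : Finset V) := by
      intro w; rcases hcov w with h | h <;> simp [h]
    exact Finite.of_injective (fun w => (⟨w, hmem w⟩ : {x // x ∈ (X ∪ Y : Finset V)}))
      (fun a b h => by simpa using h)
  have hb1 := hbip m1 hm1.1 hm1.2
  have hb2 := hbip m2 hm2.1 hm2.2
  -- extension lemma: every G m1-neighbor of v 0 is on the path
  have hext : ∀ w : V, (G m1).Adj (v 0) w → ∃ s, 1 ≤ s ∧ s ≤ p - 1 ∧ v s = w := by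
    intro w hw
    by_contra hcon
    push_neg at hcon
    have hwP : ∀ i ≤ p - 1, v i ≠ w := by
      intro i hi
      rcases Nat.eq_zero_or_pos i with h | h
      · subst h; exact hw.ne
      · exact hcon i h hi
    set v' : ℕ → V := fun i => if i = 0 then w else v (i - 1) with hv'def
    set φ' : ℕ → ℕ := fun i => if i = 0 then m1 else φ (i - 1) with hφ'def
    have hrp : IsRainbowPath G (2 * n - 1) p v' φ' := by
      refine ⟨?_, ?_, ?_, ?_⟩
      · intro i hi j hj hij
        simp only [Set.mem_Iic] at hi hj
        by_cases hi0 : i = 0 <;> by_cases hj0 : j = 0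
        · omega
        · exfalso; simp only [hv'def, hi0, if_pos, if_neg hj0] at hij
          exact hwP (j - 1) (by omega) hij.symm
        · exfalso; simp only [hv'def, hj0, if_pos, if_neg hi0] at hij
          exact hwP (i - 1) (by omega) hij
        · simp only [hv'def, if_neg hi0, if_neg hj0] at hij
          have := hvinj (Set.mem_Iic.2 (by omega : i - 1 ≤ p - 1))
            (Set.mem_Iic.2 (by omega : j - 1 ≤ p - 1)) hij
          omega
      · intro i hi j hj hij
        simp only [Set.mem_Iio] at hi hj
        by_cases hi0 : i = 0 <;> by_cases hj0 : j = 0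
        · omega
        · exfalso; simp only [hφ'def, hi0, if_pos, if_neg hj0] at hij
          exact hm1not (j - 1) (by omega) hij.symm
        · exfalso; simp only [hφ'def, hj0, if_pos, if_neg hi0] at hij
          exact hm1not (i - 1) (by omega) hij
        · simp only [hφ'def, if_neg hi0, if_neg hj0] at hij
          have := hφinj (Set.mem_Iio.2 (by omega : i - 1 < p - 1))
            (Set.mem_Iio.2 (by omega : j - 1 < p - 1)) hij
          omega
      · intro i hi
        by_cases hi0 : i = 0
        · simp only [hφ'def, hi0, if_pos]; exact hm1
        · simp only [hφ'def, if_neg hi0]; exact hφbd (i - 1) (by omega)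
      · intro i hi
        by_cases hi0 : i = 0
        · subst hi0
          have h0 : v' 0 = w := by simp [hv'def]
          have h1 : v' 1 = v 0 := by simp [hv'def]
          have hq0 : φ' 0 = m1 := by simp [hφ'def]
          rw [h0, h1, hq0]
          exact hw.symm
        · have h1 : i + 1 ≠ 0 := by omega
          simp only [hv'def, hφ'def, if_neg hi0, if_neg h1]
          have := hadj (i - 1) (by omega)
          have he : i - 1 + 1 = i := by omega
          rw [he] at this
          have he2 : i + 1 - 1 = i := by omega
          rw [he2]
          exact this
    have := hmax v' φ' p hrp
    omega
  -- S1 as a set of indices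
  set S1 : Set ℕ := {s : ℕ | 1 ≤ s ∧ s ≤ p - 1 ∧ (G m1).Adj (v 0) (v s)} with hS1def
  have hS1fin : S1.Finite := (Set.finite_Icc 1 (p - 1)).subset (by
    intro s hs; simp only [hS1def, Set.mem_setOf_eq] at hs; exact Set.mem_Icc.2 ⟨hs.1, hs.2.1⟩)
  have hN1 : (G m1).neighborSet (v 0) = v '' S1 := by
    ext w
    constructor
    · intro hw
      obtain ⟨s, hs1, hs2, hs3⟩ := hext w hw
      exact ⟨s, ⟨hs1, hs2, hs3 ▸ hw⟩, hs3⟩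
    · rintro ⟨s, hs, rfl⟩
      exact hs.2.2
  have hS1card : (n + 1) / 2 ≤ S1.ncard := by
    have h1 := hdeg m1 hm1.1 hm1.2 (v 0)
    rw [hN1] at h1
    have h2 : (v '' S1).ncard = S1.ncard := Set.ncard_image_of_injOn (by
      intro a ha b hb hab
      simp only [hS1def, Set.mem_setOf_eq] at ha hb
      exact hvinj (Set.mem_Iic.2 ha.2.1) (Set.mem_Iic.2 hb.2.1) hab)
    omega
  -- facts about elements of S1
  have hS1mem : ∀ s ∈ S1, v s ∈ Y ∧ v (s - 1) ∈ X := by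
    intro s hs
    obtain ⟨hs1, hs2, hs3⟩ := hs
    have hvs : v s ∈ Y := by
      rcases hb1 _ _ hs3 with ⟨_, h⟩ | ⟨h, _⟩
      · exact h
      · exact absurd hstart (Finset.disjoint_left.1 hdisj.symm h)
    refine ⟨hvs, ?_⟩
    have hadj' := hadj (s - 1) (by omega)
    have he : s - 1 + 1 = s := by omega
    rw [he] at hadj'
    have hbs := hbip (φ (s - 1)) (hφbd (s - 1) (by omega)).1 (hφbd (s - 1) (by omega)).2
    rcases hbs _ _ hadj' with ⟨h, _⟩ | ⟨_, h⟩
    · exact h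
    · exact absurd hvs (Finset.disjoint_left.1 hdisj h)
  -- T : the X-vertices preceding S1 indices
  set T : Set V := (fun s => v (s - 1)) '' S1 with hTdef
  have hTcard : T.ncard = S1.ncard := Set.ncard_image_of_injOn (by
    intro a ha b hb hab
    simp only [hS1def, Set.mem_setOf_eq] at ha hb
    have := hvinj (Set.mem_Iic.2 (by omega : a - 1 ≤ p - 1))
      (Set.mem_Iic.2 (by omega : b - 1 ≤ p - 1)) hab
    omega)
  have hTX : T ⊆ (X : Set V) := by
    rintro _ ⟨s, hs, rfl⟩
    exact (hS1mem s hs).2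
  -- the key argument, for an arbitrary z ∈ Y off the path
  have key : ∀ z : V, z ∈ Y → (∀ i ≤ p - 1, v i ≠ z) →
      (∀ s ∈ S1, ¬ (G m2).Adj z (v (s - 1))) ∧ Even n ∧
      ((G m2).neighborSet z).ncard = n / 2 ∧
      (∀ a ∈ X, (∀ i ≤ p - 1, v i ≠ a) → (G m2).Adj z a) := by
    intro z hz hzP
    -- rotation: no s ∈ S1 with z adjacent to v (s-1)
    have hrot : ∀ s ∈ S1, ¬ (G m2).Adj z (v (s - 1)) := by
      rintro s ⟨hs1, hs2, hs3⟩ hzadj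
      set v' : ℕ → V := fun i => if i = 0 then z else if i ≤ s then v (s - i) else v (i - 1)
        with hv'def
      set φ' : ℕ → ℕ := fun i => if i = 0 then m2 else if i < s then φ (s - i - 1)
        else if i = s then m1 else φ (i - 1) with hφ'def
      have hv'eq : ∀ i, 1 ≤ i → i ≤ p → ∃ k, k ≤ p - 1 ∧ v' i = v k ∧
          ((i ≤ s ∧ k = s - i) ∨ (s < i ∧ k = i - 1)) := by
        intro i hi1 hip
        by_cases h : i ≤ s
        · exact ⟨s - i, by omega,
            by simp only [hv'def]; rw [if_neg (by omega : ¬ i = 0), if_pos h], Or.inl ⟨h, rfl⟩⟩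
        · exact ⟨i - 1, by omega,
            by simp only [hv'def]; rw [if_neg (by omega : ¬ i = 0), if_neg h], Or.inr ⟨by omega, rfl⟩⟩
      have hrp : IsRainbowPath G (2 * n - 1) p v' φ' := by
        refine ⟨?_, ?_, ?_, ?_⟩
        · intro i hi j hj hij
          simp only [Set.mem_Iic] at hi hj
          by_cases hi0 : i = 0 <;> by_cases hj0 : j = 0
          · omega
          · exfalso
            obtain ⟨k, hk, hke, _⟩ := hv'eq j (by omega) hj
            rw [hke] at hij
            simp only [hv'def, hi0, if_pos] at hij
            exact hzP k hk hij.symm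
          · exfalso
            obtain ⟨k, hk, hke, _⟩ := hv'eq i (by omega) hi
            rw [hke] at hij
            simp only [hv'def, hj0, if_pos] at hij
            exact hzP k hk hij
          · obtain ⟨k, hk, hke, hkc⟩ := hv'eq i (by omega) hi
            obtain ⟨l, hl, hle, hlc⟩ := hv'eq j (by omega) hj
            rw [hke, hle] at hij
            have := hvinj (Set.mem_Iic.2 hk) (Set.mem_Iic.2 hl) hij
            omega
        · intro i hi j hj hij
          simp only [Set.mem_Iio] at hi hj
          have hval : ∀ i, i < p → (i = 0 ∧ φ' i = m2) ∨ (i = s ∧ φ' i = m1) ∨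
              (∃ k, k < p - 1 ∧ φ' i = φ k ∧
                ((1 ≤ i ∧ i < s ∧ k = s - i - 1) ∨ (s < i ∧ k = i - 1))) := by
            intro i hip
            by_cases h0 : i = 0
            · exact Or.inl ⟨h0, by simp [hφ'def, h0]⟩
            by_cases hlt : i < s
            · exact Or.inr (Or.inr ⟨s - i - 1, by omega, by simp [hφ'def, h0, hlt],
                Or.inl ⟨by omega, hlt, rfl⟩⟩)
            by_cases heq : i = s
            · exact Or.inr (Or.inl ⟨heq,
                by simp only [hφ'def]; rw [if_neg h0, if_neg hlt, if_pos heq]⟩)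
            · exact Or.inr (Or.inr ⟨i - 1, by omega, by simp [hφ'def, h0, hlt, heq],
                Or.inr ⟨by omega, rfl⟩⟩)
          rcases hval i hi with ⟨hi1, hi2⟩ | ⟨hi1, hi2⟩ | ⟨k, hk, hi2, hkc⟩ <;>
            rcases hval j hj with ⟨hj1, hj2⟩ | ⟨hj1, hj2⟩ | ⟨l, hl, hj2, hlc⟩ <;>
            rw [hi2, hj2] at hij
          · omega
          · exact absurd hij hm12.symm
          · exact absurd hij.symm (hm2not l hl)
          · exact absurd hij hm12
          · omega
          · exact absurd hij.symm (hm1not l hl)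
          · exact absurd hij (hm2not k hk)
          · exact absurd hij (hm1not k hk)
          · have := hφinj (Set.mem_Iio.2 hk) (Set.mem_Iio.2 hl) hij
            omega
        · intro i hi
          by_cases h0 : i = 0
          · simpa [hφ'def, h0] using hm2
          by_cases hlt : i < s
          · simp only [hφ'def, if_neg h0, if_pos hlt]; exact hφbd _ (by omega)
          by_cases heq : i = s
          · simp only [hφ'def, if_neg h0, if_neg hlt, if_pos heq]; exact hm1
          · simp only [hφ'def, if_neg h0, if_neg hlt, if_neg heq]; exact hφbd _ (by omega)
        · intro i hip
          by_cases h0 : i = 0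
          · subst h0
            have hv1 : v' 1 = v (s - 1) := by simp [hv'def, hs1]
            have hp0 : φ' 0 = m2 := by simp [hφ'def]
            have hv0 : v' 0 = z := by simp [hv'def]
            rw [hv0, hv1, hp0]
            exact hzadj
          by_cases hlt : i < s
          · have hvi : v' i = v (s - i) := by simp [hv'def, h0, (by omega : i ≤ s)]
            have hvi1 : v' (i + 1) = v (s - i - 1) := by
              have : s - (i + 1) = s - i - 1 := by omega
              simp [hv'def, (by omega : i + 1 ≠ 0), (by omega : i + 1 ≤ s), this]
            have hpi : φ' i = φ (s - i - 1) := by simp [hφ'def, h0, hlt]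
            rw [hvi, hvi1, hpi]
            have := hadj (s - i - 1) (by omega)
            have he : s - i - 1 + 1 = s - i := by omega
            rw [he] at this
            exact this.symm
          by_cases heq : i = s
          · subst heq
            have hvi : v' i = v 0 := by simp [hv'def, h0]
            have hvi1 : v' (i + 1) = v i := by
              simp [hv'def, (by omega : i + 1 ≠ 0), (by omega : ¬ i + 1 ≤ i)]
            have hpi : φ' i = m1 := by simp [hφ'def, h0]
            rw [hvi, hvi1, hpi]
            exact hs3
          · have hvi : v' i = v (i - 1) := by
              simp only [hv'def]; rw [if_neg h0, if_neg (by omega : ¬ i ≤ s)]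
            have hvi1 : v' (i + 1) = v i := by
              simp only [hv'def]
              rw [if_neg (by omega : ¬ i + 1 = 0), if_neg (by omega : ¬ i + 1 ≤ s)]
              simp only [Nat.add_sub_cancel]
            have hpi : φ' i = φ (i - 1) := by simp [hφ'def, h0, hlt, heq]
            rw [hvi, hvi1, hpi]
            have := hadj (i - 1) (by omega)
            have he : i - 1 + 1 = i := by omega
            rw [he] at this
            exact this
      have := hmax v' φ' p hrp
      omega
    -- counting
    have hN2X : (G m2).neighborSet z ⊆ (X : Set V) \ T := by
      intro w hw
      simp only [SimpleGraph.mem_neighborSet] at hw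
      constructor
      · rcases hb2 _ _ hw with ⟨h, _⟩ | ⟨_, h⟩
        · exact absurd hz (Finset.disjoint_left.1 hdisj h)
        · exact h
      · rintro ⟨s, hs, rfl⟩
        exact hrot s hs hw
    have hdiffcard : ((X : Set V) \ T).ncard = n - S1.ncard := by
      rw [Set.ncard_diff hTX (Set.toFinite _), hTcard]
      simp [hX]
    have hle : ((G m2).neighborSet z).ncard ≤ n - S1.ncard := by
      rw [← hdiffcard]
      exact Set.ncard_le_ncard hN2X (Set.toFinite _)
    have hge := hdeg m2 hm2.1 hm2.2 z
    have heven : n % 2 = 0 := by omega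
    have hcard2 : ((G m2).neighborSet z).ncard = n / 2 := by omega
    have hS1half : S1.ncard = n / 2 := by omega
    have hNeq : (G m2).neighborSet z = (X : Set V) \ T := by
      apply Set.eq_of_subset_of_ncard_le hN2X _ (Set.toFinite _)
      rw [hdiffcard, hcard2, hS1half]
      omega
    refine ⟨hrot, Nat.even_iff.2 heven, hcard2, ?_⟩
    intro a ha haP
    have haT : a ∉ T := by
      rintro ⟨s, hs, rfl⟩
      simp only [hS1def, Set.mem_setOf_eq] at hs
      exact haP (s - 1) (by omega) rfl
    have : a ∈ (G m2).neighborSet z := by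
      rw [hNeq]; exact ⟨ha, haT⟩
    exact this
  obtain ⟨hrot', heven, hcard, _⟩ := key y' hy' hy'P
  refine ⟨?_, heven, hcard, ?_⟩
  · ext s
    simp only [Set.mem_inter_iff, Set.mem_setOf_eq, Set.mem_empty_iff_false, iff_false]
    rintro ⟨⟨h1, h2, h3⟩, _, _, h6⟩
    exact hrot' s ⟨h1, h2, h3⟩ h6
  · intro a haX haP b hbY hbP
    obtain ⟨_, _, _, hadjall⟩ := key b hbY hbP
    exact (hadjall a haX haP).symm
end
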